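/- Transcendence from multiple specialized experts: in the partition setting with p_test assigning positive mass to at least two distinct parts X_i ≠ X_j, there exists τ ∈ (0,1) such that for all 0 < τ' ≤ τ, the tempered mixture f̂_{τ'}(·|x) = softmax(f̂(·|x); τ'), where f̂ = (1/k)∑_i f_i, satisfies R(f̂_{τ'}) > max_i R(f_i). -/

import Mathlib

open Finset

/-- Softmax with temperature `τ`. -/
noncomputable def softmax {Y : Type} [Fintype Y] (q : Y → ℝ) (τ : ℝ) (y : Y) : ℝ :=
  Real.exp (q y / τ) / ∑ y', Real.exp (q y' / τ)

open scoped Classical in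
/-- The set of maximizers of `q`. -/
noncomputable def maxSet {Y : Type} [Fintype Y] (q : Y → ℝ) : Finset Y :=
  Finset.univ.filter (fun y => ∀ y', q y' ≤ q y)

/-- Expected reward of a conditional distribution `f` under test distribution `ptest`. -/
noncomputable def reward {X Y : Type} [Fintype X] [Fintype Y]
    (ptest : X → ℝ) (r : X → Y → ℝ) (f : X → Y → ℝ) : ℝ :=
  ∑ x, ptest x * ∑ y, f x y * r x y

/-!
Each expert `f i` is optimal on `Xs i` and uniform elsewhere. Since `r x` is non-constant, uniform
play is strictly suboptimal, and `ptest` charges some point outside every `Xs i`, so every expert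
earns strictly less than the oracle reward `∑ x, ptest x * max_y r x y`. In the mixture `fhat x`
the expert responsible for `x` adds weight exactly on the maximizers of `r x`, so every maximizer
of `fhat x` maximizes `r x`. As `τ → 0⁺` the softmax concentrates on the maximizers of `fhat x`,
hence the reward of the tempered mixture tends to the oracle reward and eventually beats every
expert.
-/

open Filter Topology

section Softmax

variable {Y : Type} [Fintype Y]

theorem mem_maxSet {q : Y → ℝ} {y : Y} : y ∈ maxSet q ↔ ∀ y', q y' ≤ q y := by
  simp [maxSet]

theorem maxSet_nonempty [Nonempty Y] (q : Y → ℝ) : (maxSet q).Nonempty := by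
  obtain ⟨y, -, hy⟩ := exists_max_image univ q univ_nonempty
  exact ⟨y, mem_maxSet.2 fun y' => hy y' (mem_univ _)⟩

theorem mem_maxSet_iff_eq_sup' [Nonempty Y] {q : Y → ℝ} {y : Y} :
    y ∈ maxSet q ↔ q y = univ.sup' univ_nonempty q := by
  rw [mem_maxSet]
  exact ⟨fun h => le_antisymm (le_sup' q (mem_univ y)) (sup'_le _ _ fun y' _ => h y'),
    fun h y' => h ▸ le_sup' q (mem_univ y')⟩

theorem sum_div_card_lt_sup' [Nonempty Y] {v : Y → ℝ} (hv : ∃ y y', v y ≠ v y') :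
    (∑ y, v y) / Fintype.card Y < univ.sup' univ_nonempty v := by
  have hcard : (0 : ℝ) < Fintype.card Y := by exact_mod_cast Fintype.card_pos
  obtain ⟨y, y', hne⟩ := hv
  have hlt : ∃ z, v z < univ.sup' univ_nonempty v := by
    by_contra! h
    have hconst : ∀ z, v z = univ.sup' univ_nonempty v :=
      fun z => (le_sup' v (mem_univ z)).antisymm (h z)
    exact hne ((hconst y).trans (hconst y').symm)
  obtain ⟨z, hz⟩ := hlt
  rw [div_lt_iff₀ hcard]
  calc ∑ y, v y < ∑ _y : Y, univ.sup' univ_nonempty v :=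
        sum_lt_sum (fun y _ => le_sup' v (mem_univ y)) ⟨z, mem_univ z, hz⟩
    _ = univ.sup' univ_nonempty v * Fintype.card Y := by
        rw [sum_const, card_univ, nsmul_eq_mul, mul_comm]

theorem softmax_nonneg (q : Y → ℝ) (τ : ℝ) (y : Y) : 0 ≤ softmax q τ y :=
  div_nonneg (Real.exp_pos _).le (sum_nonneg fun _ _ => (Real.exp_pos _).le)

theorem sum_softmax [Nonempty Y] (q : Y → ℝ) (τ : ℝ) : ∑ y, softmax q τ y = 1 := by
  simp only [softmax, ← sum_div]
  exact div_self (sum_pos (fun _ _ => Real.exp_pos _) univ_nonempty).ne'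

theorem softmax_le_exp_sub (q : Y → ℝ) (τ : ℝ) (y z : Y) :
    softmax q τ y ≤ Real.exp ((q y - q z) / τ) := by
  calc softmax q τ y ≤ Real.exp (q y / τ) / Real.exp (q z / τ) :=
        div_le_div_of_nonneg_left (Real.exp_pos _).le (Real.exp_pos _)
          (single_le_sum (f := fun y' => Real.exp (q y' / τ))
            (fun _ _ => (Real.exp_pos _).le) (mem_univ z))
    _ = Real.exp ((q y - q z) / τ) := by rw [← Real.exp_sub, sub_div]

theorem tendsto_softmax_of_lt {q : Y → ℝ} {y z : Y} (h : q y < q z) :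
    Tendsto (fun τ => softmax q τ y) (𝓝[>] 0) (𝓝 0) := by
  have hexp : Tendsto (fun τ : ℝ => Real.exp ((q y - q z) / τ)) (𝓝[>] 0) (𝓝 0) := by
    simp only [div_eq_mul_inv]
    exact Real.tendsto_exp_atBot.comp
      (tendsto_inv_nhdsGT_zero.const_mul_atTop_of_neg (sub_neg.2 h))
  exact tendsto_of_tendsto_of_tendsto_of_le_of_le' tendsto_const_nhds hexp
    (Eventually.of_forall fun τ => softmax_nonneg q τ y)
    (Eventually.of_forall fun τ => softmax_le_exp_sub q τ y z)

theorem tendsto_sum_softmax_mul [Nonempty Y] {q v : Y → ℝ} (h : maxSet q ⊆ maxSet v) :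
    Tendsto (fun τ => ∑ y, softmax q τ y * v y) (𝓝[>] 0)
      (𝓝 (univ.sup' univ_nonempty v)) := by
  set M := univ.sup' univ_nonempty v
  have hregret : Tendsto (fun τ => ∑ y, softmax q τ y * (M - v y)) (𝓝[>] 0) (𝓝 0) := by
    rw [← sum_const_zero (s := (univ : Finset Y))]
    refine tendsto_finsetSum _ fun y _ => ?_
    by_cases hy : v y = M
    · simp [hy]
    · have hq : y ∉ maxSet q := fun hq => hy (mem_maxSet_iff_eq_sup'.1 (h hq))
      obtain ⟨z, hz⟩ := not_forall.1 (mt mem_maxSet.2 hq)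
      simpa using (tendsto_softmax_of_lt (not_le.1 hz)).mul_const (M - v y)
  have hsum : ∀ τ, ∑ y, softmax q τ y * v y = M - ∑ y, softmax q τ y * (M - v y) := by
    intro τ
    simp only [mul_sub, sum_sub_distrib, ← sum_mul, sum_softmax, one_mul, sub_sub_cancel]
  simpa [hsum] using hregret.const_sub M

end Softmax

section Experts

open scoped Classical

variable {X Y : Type} [Fintype Y]

noncomputable def oracleReward [Fintype X] [Nonempty Y] (ptest : X → ℝ) (r : X → Y → ℝ) : ℝ :=
  ∑ x, ptest x * univ.sup' univ_nonempty (r x)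

noncomputable def expert (r : X → Y → ℝ) (S : Set X) (x : X) (y : Y) : ℝ :=
  (if x ∈ S ∧ y ∈ maxSet (r x) then (1 : ℝ) / (maxSet (r x)).card else 0)
    + (if x ∉ S then (1 : ℝ) / (Fintype.card Y : ℝ) else 0)

variable {r : X → Y → ℝ} {S : Set X} {x : X}

theorem expert_of_mem (hx : x ∈ S) (y : Y) :
    expert r S x y = if y ∈ maxSet (r x) then (1 : ℝ) / (maxSet (r x)).card else 0 := by
  simp [expert, hx]

theorem expert_of_notMem (hx : x ∉ S) (y : Y) :
    expert r S x y = 1 / (Fintype.card Y : ℝ) := by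
  simp [expert, hx]

theorem sum_expert_mul_of_mem [Nonempty Y] (hx : x ∈ S) :
    ∑ y, expert r S x y * r x y = univ.sup' univ_nonempty (r x) := by
  have hcard : ((maxSet (r x)).card : ℝ) ≠ 0 := by
    exact_mod_cast (maxSet_nonempty (r x)).card_pos.ne'
  simp only [expert_of_mem hx, ite_mul, zero_mul, sum_ite_mem, univ_inter]
  rw [sum_congr rfl fun y hy => by rw [mem_maxSet_iff_eq_sup'.1 hy], sum_const, nsmul_eq_mul]
  field_simp

theorem sum_expert_mul_of_notMem (hx : x ∉ S) :
    ∑ y, expert r S x y * r x y = (∑ y, r x y) / Fintype.card Y := by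
  simp only [expert_of_notMem hx, one_div_mul_eq_div, sum_div]

theorem reward_expert_lt_oracleReward [Fintype X] [Nonempty Y] (hr : ∀ x, ∃ y y', r x y ≠ r x y')
    {ptest : X → ℝ} (hp0 : ∀ x, 0 ≤ ptest x) {x₀ : X} (hx₀ : 0 < ptest x₀) (hx₀S : x₀ ∉ S) :
    reward ptest r (expert r S) < oracleReward ptest r := by
  have hlt : ∀ x ∉ S, ∑ y, expert r S x y * r x y < univ.sup' univ_nonempty (r x) :=
    fun x hx => (sum_expert_mul_of_notMem hx).trans_lt (sum_div_card_lt_sup' (hr x))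
  have hle : ∀ x, ∑ y, expert r S x y * r x y ≤ univ.sup' univ_nonempty (r x) := by
    intro x
    by_cases hx : x ∈ S
    · exact (sum_expert_mul_of_mem hx).le
    · exact (hlt x hx).le
  exact sum_lt_sum (fun x _ => mul_le_mul_of_nonneg_left (hle x) (hp0 x))
    ⟨x₀, mem_univ _, mul_lt_mul_of_pos_left (hlt x₀ hx₀S) hx₀⟩

theorem maxSet_smul_sum_expert_subset [Nonempty Y] {ι : Type} [Fintype ι] {Xs : ι → Set X}
    (hcover : ∀ x, ∃ i, x ∈ Xs i) {c : ℝ} (hc : 0 < c) (x : X) :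
    maxSet (fun y => c * ∑ i, expert r (Xs i) x y) ⊆ maxSet (r x) := by
  intro y hy
  by_contra hyM
  obtain ⟨z, hzM⟩ := maxSet_nonempty (r x)
  obtain ⟨i₀, hi₀⟩ := hcover x
  have hle : ∀ i, expert r (Xs i) x y ≤ expert r (Xs i) x z := by
    intro i
    by_cases hx : x ∈ Xs i
    · simp only [expert_of_mem hx, hyM, hzM, if_false, if_true]
      positivity
    · simp only [expert_of_notMem hx, le_refl]
  have hlt : expert r (Xs i₀) x y < expert r (Xs i₀) x z := by
    have hcard : 0 < (maxSet (r x)).card := (maxSet_nonempty (r x)).card_pos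
    simp only [expert_of_mem hi₀, hyM, hzM, if_false, if_true]
    positivity
  have hsum : c * ∑ i, expert r (Xs i) x y < c * ∑ i, expert r (Xs i) x z :=
    mul_lt_mul_of_pos_left (sum_lt_sum (fun i _ => hle i) ⟨i₀, mem_univ _, hlt⟩) hc
  exact (mem_maxSet.1 hy z).not_gt hsum

end Experts

theorem tendsto_reward_softmax {X Y : Type} [Fintype X] [Fintype Y] [Nonempty Y]
    (ptest : X → ℝ) {r q : X → Y → ℝ} (h : ∀ x, maxSet (q x) ⊆ maxSet (r x)) :
    Tendsto (fun τ => reward ptest r (fun x => softmax (q x) τ)) (𝓝[>] 0)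
      (𝓝 (oracleReward ptest r)) :=
  tendsto_finsetSum _ fun x _ => (tendsto_sum_softmax_mul (h x)).const_mul (ptest x)

theorem exists_mem_pos_of_sum_ite_pos {X : Type} [Fintype X] {p : X → ℝ} {A : Set X}
    [DecidablePred (· ∈ A)] (h : 0 < ∑ x, if x ∈ A then p x else 0) : ∃ x ∈ A, 0 < p x := by
  by_contra! H
  exact h.not_ge (sum_nonpos fun x _ => by split_ifs with hx; exacts [H x hx, le_rfl])

theorem exists_pos_notMem_of_two_parts {X ι : Type} [Fintype X] {p : X → ℝ} {Xs : ι → Set X}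
    [∀ i, DecidablePred (· ∈ Xs i)] (hdisj : ∀ i j, i ≠ j → Disjoint (Xs i) (Xs j))
    (hmass : ∃ i j, i ≠ j ∧ (0 < ∑ x, if x ∈ Xs i then p x else 0)
      ∧ (0 < ∑ x, if x ∈ Xs j then p x else 0)) (i : ι) :
    ∃ x, 0 < p x ∧ x ∉ Xs i := by
  obtain ⟨i₁, i₂, hne, h₁, h₂⟩ := hmass
  obtain ⟨j, hji, hj⟩ : ∃ j, j ≠ i ∧ 0 < ∑ x, if x ∈ Xs j then p x else 0 := by
    by_cases h : i₁ = i
    · exact ⟨i₂, h ▸ hne.symm, h₂⟩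
    · exact ⟨i₁, h, h₁⟩
  obtain ⟨x, hxj, hx⟩ := exists_mem_pos_of_sum_ite_pos hj
  exact ⟨x, hx, Set.disjoint_left.1 (hdisj j i hji) hxj⟩

theorem exists_Ioo_forall_le_of_eventually_nhdsGT {P : ℝ → Prop} (h : ∀ᶠ τ in 𝓝[>] 0, P τ) :
    ∃ τ : ℝ, τ ∈ Set.Ioo (0 : ℝ) 1 ∧ ∀ τ' : ℝ, 0 < τ' → τ' ≤ τ → P τ' := by
  obtain ⟨ε, hε, hP⟩ := (nhdsGT_basis 0).eventually_iff.1 h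
  refine ⟨min (ε / 2) (1 / 2), ⟨by positivity, by linarith [min_le_right (ε / 2) (1 / 2)]⟩,
    fun τ' h0 hle => hP ⟨h0, ?_⟩⟩
  linarith [min_le_left (ε / 2) (1 / 2)]

open scoped Classical in
/-- Transcendence from multiple specialized experts: in the partition setting with positive
test mass on at least two parts, there is a temperature `τ ∈ (0,1)` such that for every
`τ' ∈ (0,τ]` the tempered uniform mixture strictly beats every expert. -/
theorem transcendence_multiple_experts {X Y : Type}
    [Fintype X] [Fintype Y] [Nonempty Y]
    {k : ℕ} (hk : 2 ≤ k)
    (r : X → Y → ℝ) (hr : ∀ x, ∃ y y', r x y ≠ r x y')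
    (Xs : Fin k → Set X)
    (hcover : (⋃ i, Xs i) = Set.univ)
    (hdisj : ∀ i j, i ≠ j → Disjoint (Xs i) (Xs j))
    (f : Fin k → X → Y → ℝ)
    (hf : ∀ i x y, f i x y =
      (if x ∈ Xs i ∧ y ∈ maxSet (fun y' => r x y') then
        (1 : ℝ) / (maxSet (fun y' => r x y')).card else 0)
      + (if x ∉ Xs i then (1 : ℝ) / (Fintype.card Y : ℝ) else 0))
    (fhat : X → Y → ℝ) (hfhat : ∀ x y, fhat x y = (1 / (k : ℝ)) * ∑ i, f i x y)
    (ptest : X → ℝ) (hp0 : ∀ x, 0 ≤ ptest x)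
    (hmass : ∃ i j, i ≠ j ∧ (0 < ∑ x, if x ∈ Xs i then ptest x else 0)
      ∧ (0 < ∑ x, if x ∈ Xs j then ptest x else 0)) :
    ∃ τ : ℝ, τ ∈ Set.Ioo (0 : ℝ) 1 ∧ ∀ τ' : ℝ, 0 < τ' → τ' ≤ τ →
      reward ptest r (fun x => softmax (fhat x) τ')
        > Finset.univ.sup' ⟨⟨0, by omega⟩, Finset.mem_univ _⟩
            (fun i => reward ptest r (f i)) := by
  obtain rfl : f = fun i => expert r (Xs i) := funext fun i => funext fun x => funext (hf i x)
  obtain rfl : fhat = fun x y => 1 / (k : ℝ) * ∑ i, expert r (Xs i) x y :=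
    funext fun x => funext (hfhat x)
  have hexperts : (univ : Finset (Fin k)).sup' ⟨⟨0, by omega⟩, mem_univ _⟩
      (fun i => reward ptest r (expert r (Xs i))) < oracleReward ptest r := by
    refine (sup'_lt_iff _).2 fun i _ => ?_
    obtain ⟨x₀, hx₀, hx₀i⟩ := exists_pos_notMem_of_two_parts hdisj hmass i
    exact reward_expert_lt_oracleReward hr hp0 hx₀ hx₀i
  have hcover' : ∀ x, ∃ i, x ∈ Xs i := fun x => Set.mem_iUnion.1 (hcover ▸ Set.mem_univ x)
  have hlim := tendsto_reward_softmax ptest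
    (maxSet_smul_sum_expert_subset (r := r) hcover' (one_div_pos.2 (by positivity : (0 : ℝ) < k)))
  exact exists_Ioo_forall_le_of_eventually_nhdsGT (hlim.eventually (lt_mem_nhds hexperts))
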